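/- arXiv:2103.11499 — 8 statements merged into one kernel-verified Lean document; each statement's English description precedes it below -/
import Mathlib

section
/- For every positive integer L, the set of pairs (X, Y) of real symmetric L×L matrices such that X is positive semidefinite and both X + Y and X − Y are positive semidefinite is equal to the closure (in the Euclidean topology on pairs of L×L real matrices) of the set of pairs (X, Y) of real symmetric L×L matrices such that X is positive definite and X − Y X⁻¹ Y is positive definite. -/
/-!
For `X ≻ 0` the Schur complement factors as `X - Y X⁻¹ Y = (X + Y) X⁻¹ (X - Y)`. Hence
`2 (X + Y) = (X - Y X⁻¹ Y) + (X + Y) X⁻¹ (X + Y)`, so a positive definite Schur complement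
forces `X ± Y ≻ 0`; conversely, if `X ± Y ≻ 0` then the inverse of the Schur complement is
`((X + Y)⁻¹ + (X - Y)⁻¹) / 2`, which is positive definite. Thus the second set consists exactly
of the pairs with `X, X ± Y ≻ 0`. The first set is closed, and `(X + ε, Y)` approximates any of
its points from inside the second set.
-/

open Matrix
open Filter Topology
open scoped ComplexOrder

namespace Matrix

variable {𝕜 n : Type*} [RCLike 𝕜]

theorem isClosed_setOf_isSymm {α : Type*} [TopologicalSpace α] [T2Space α] :
    IsClosed {A : Matrix n n α | A.IsSymm} :=
  isClosed_eq continuous_id.matrix_transpose continuous_id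

theorem PosDef.of_add_self {A : Matrix n n 𝕜} (h : (A + A).PosDef) : A.PosDef := by
  simpa [← two_smul 𝕜 A, smul_smul] using h.smul (show (0 : 𝕜) < 2⁻¹ by norm_num)

theorem PosSemidef.add_smul_one_posDef [DecidableEq n] {A : Matrix n n 𝕜} (hA : A.PosSemidef)
    {ε : ℝ} (hε : 0 < ε) : (A + ε • 1).PosDef :=
  PosDef.posSemidef_add hA (PosDef.one.smul hε)

variable [Fintype n]

theorem isClosed_setOf_posSemidef : IsClosed {A : Matrix n n 𝕜 | A.PosSemidef} := by
  have : {A : Matrix n n 𝕜 | A.PosSemidef} =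
      {A | Aᴴ = A} ∩ ⋂ x : n → 𝕜, {A | 0 ≤ star x ⬝ᵥ A *ᵥ x} := by
    ext A
    simp [posSemidef_iff_dotProduct_mulVec, IsHermitian]
  rw [this]
  exact (isClosed_eq continuous_id.matrix_conjTranspose continuous_id).inter <|
    isClosed_iInter fun x => isClosed_le continuous_const <|
      continuous_const.dotProduct (continuous_id.matrix_mulVec continuous_const)

variable [DecidableEq n] {X Y : Matrix n n 𝕜}

theorem sub_mul_inv_mul_eq_add_mul_inv_mul_sub (hX : IsUnit X.det) :
    X - Y * X⁻¹ * Y = (X + Y) * X⁻¹ * (X - Y) := by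
  simp only [add_mul, mul_sub, Matrix.mul_assoc, mul_nonsing_inv _ hX, nonsing_inv_mul _ hX,
    Matrix.mul_one, Matrix.one_mul]
  abel

theorem sub_mul_inv_mul_eq_sub_mul_inv_mul_add (hX : IsUnit X.det) :
    X - Y * X⁻¹ * Y = (X - Y) * X⁻¹ * (X + Y) := by
  simpa [sub_eq_add_neg] using sub_mul_inv_mul_eq_add_mul_inv_mul_sub (Y := -Y) hX

theorem PosDef.add_of_posDef_sub_mul_inv_mul (hX : X.PosDef) (hY : Y.IsHermitian)
    (hS : (X - Y * X⁻¹ * Y).PosDef) : (X + Y).PosDef := by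
  have hdet := (isUnit_iff_isUnit_det X).mp hX.isUnit
  have key : (X - Y * X⁻¹ * Y) + (X + Y)ᴴ * X⁻¹ * (X + Y) = (X + Y) + (X + Y) := by
    rw [(hX.isHermitian.add hY).eq, sub_mul_inv_mul_eq_add_mul_inv_mul_sub hdet,
      ← Matrix.mul_add, sub_add_add_cancel, Matrix.mul_assoc, Matrix.mul_add,
      nonsing_inv_mul _ hdet, Matrix.mul_add, Matrix.mul_one]
  exact .of_add_self (key ▸ hS.add_posSemidef (hX.inv.posSemidef.conjTranspose_mul_mul_same _))

theorem PosDef.sub_of_posDef_sub_mul_inv_mul (hX : X.PosDef) (hY : Y.IsHermitian)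
    (hS : (X - Y * X⁻¹ * Y).PosDef) : (X - Y).PosDef := by
  simpa [sub_eq_add_neg] using
    hX.add_of_posDef_sub_mul_inv_mul hY.neg (Y := -Y) (by simpa using hS)

theorem PosDef.sub_mul_inv_mul_of_add_of_sub (hA : (X + Y).PosDef) (hB : (X - Y).PosDef) :
    (X - Y * X⁻¹ * Y).PosDef := by
  have hX : X.PosDef := .of_add_self (by simpa using hA.add hB)
  have hdet := (isUnit_iff_isUnit_det X).mp hX.isUnit
  -- the Schur complement is twice the harmonic mean of `X + Y` and `X - Y`
  have hinv : (X - Y * X⁻¹ * Y)⁻¹ = (2⁻¹ : 𝕜) • ((X + Y)⁻¹ + (X - Y)⁻¹) := by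
    have hAS : (X + Y)⁻¹ * (X - Y * X⁻¹ * Y) = X⁻¹ * (X - Y) := by
      rw [sub_mul_inv_mul_eq_add_mul_inv_mul_sub hdet, Matrix.mul_assoc,
        nonsing_inv_mul_cancel_left _ _ ((isUnit_iff_isUnit_det _).mp hA.isUnit)]
    have hBS : (X - Y)⁻¹ * (X - Y * X⁻¹ * Y) = X⁻¹ * (X + Y) := by
      rw [sub_mul_inv_mul_eq_sub_mul_inv_mul_add hdet, Matrix.mul_assoc,
        nonsing_inv_mul_cancel_left _ _ ((isUnit_iff_isUnit_det _).mp hB.isUnit)]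
    refine inv_eq_left_inv ?_
    calc (2⁻¹ : 𝕜) • ((X + Y)⁻¹ + (X - Y)⁻¹) * (X - Y * X⁻¹ * Y)
        = (2⁻¹ : 𝕜) • (X⁻¹ * (X - Y) + X⁻¹ * (X + Y)) := by
          rw [Matrix.smul_mul, Matrix.add_mul, hAS, hBS]
      _ = (2⁻¹ : 𝕜) • (X⁻¹ * X + X⁻¹ * X) := by
          rw [← Matrix.mul_add, ← Matrix.mul_add, sub_add_add_cancel]
      _ = 1 := by
          rw [nonsing_inv_mul _ hdet, ← two_smul 𝕜, smul_smul]
          norm_num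
  rw [← posDef_inv_iff, hinv]
  exact (hA.inv.add hB.inv).smul (by norm_num)

end Matrix

theorem tendsto_add_smul_nhdsGT_zero {E : Type*} [TopologicalSpace E] [AddCommGroup E]
    [Module ℝ E] [ContinuousAdd E] [ContinuousSMul ℝ E] (x v : E) :
    Tendsto (fun ε : ℝ => x + ε • v) (𝓝[>] 0) (𝓝 x) := by
  refine Tendsto.mono_left ?_ nhdsWithin_le_nhds
  simpa using (continuous_const.add (continuous_id.smul continuous_const)).tendsto
    (f := fun ε : ℝ => x + ε • v) 0

theorem stmt_0_general (L : ℕ) :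
    {p : Matrix (Fin L) (Fin L) ℝ × Matrix (Fin L) (Fin L) ℝ |
        p.1.IsSymm ∧ p.2.IsSymm ∧ p.1.PosSemidef ∧
        (p.1 + p.2).PosSemidef ∧ (p.1 - p.2).PosSemidef} =
    closure {p : Matrix (Fin L) (Fin L) ℝ × Matrix (Fin L) (Fin L) ℝ |
        p.1.IsSymm ∧ p.2.IsSymm ∧ p.1.PosDef ∧
        (p.1 - p.2 * p.1⁻¹ * p.2).PosDef} := by
  apply subset_antisymm
  · rintro ⟨X, Y⟩ ⟨hXs, hYs, hX, hA, hB⟩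
    refine mem_closure_of_tendsto
      ((tendsto_add_smul_nhdsGT_zero X 1).prodMk_nhds tendsto_const_nhds)
      (eventually_nhdsWithin_of_forall fun ε (hε : 0 < ε) => ?_)
    have hA' : (X + ε • 1 + Y).PosDef := by
      simpa only [add_right_comm] using hA.add_smul_one_posDef hε
    have hB' : (X + ε • 1 - Y).PosDef := by
      simpa only [add_sub_right_comm] using hB.add_smul_one_posDef hε
    exact ⟨hXs.add (isSymm_one.smul ε), hYs, hX.add_smul_one_posDef hε,
      .sub_mul_inv_mul_of_add_of_sub hA' hB'⟩
  · refine closure_minimal ?_ ?_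
    · rintro ⟨X, Y⟩ ⟨hXs, hYs, hX, hS⟩
      have hY : Y.IsHermitian := isHermitian_iff_isSymm.mpr hYs
      exact ⟨hXs, hYs, hX.posSemidef, (hX.add_of_posDef_sub_mul_inv_mul hY hS).posSemidef,
        (hX.sub_of_posDef_sub_mul_inv_mul hY hS).posSemidef⟩
    · exact (isClosed_setOf_isSymm.preimage continuous_fst).inter <|
        (isClosed_setOf_isSymm.preimage continuous_snd).inter <|
        (isClosed_setOf_posSemidef.preimage continuous_fst).inter <|
        (isClosed_setOf_posSemidef.preimage (continuous_fst.add continuous_snd)).inter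
          (isClosed_setOf_posSemidef.preimage (continuous_fst.sub continuous_snd))

/-- The set of pairs (X, Y) of real symmetric L×L matrices with X, X + Y and X − Y
positive semidefinite equals the closure of the set of pairs of symmetric matrices with
X positive definite and X − Y X⁻¹ Y positive definite. -/
theorem stmt_0 (L : ℕ) (hL : 1 ≤ L) :
    {p : Matrix (Fin L) (Fin L) ℝ × Matrix (Fin L) (Fin L) ℝ |
        p.1.IsSymm ∧ p.2.IsSymm ∧ p.1.PosSemidef ∧
        (p.1 + p.2).PosSemidef ∧ (p.1 - p.2).PosSemidef} =
    closure {p : Matrix (Fin L) (Fin L) ℝ × Matrix (Fin L) (Fin L) ℝ |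
        p.1.IsSymm ∧ p.2.IsSymm ∧ p.1.PosDef ∧
        (p.1 - p.2 * p.1⁻¹ * p.2).PosDef} :=
  stmt_0_general L
end

section
/- Let X and Y be real symmetric L×L matrices. If X + Y and X − Y are both positive definite, then X is positive definite and X − Y X⁻¹ Y is positive semidefinite. -/
/-!
Write `M` for the block matrix `[[X, Y], [Y, X]]`. With `P = [1; 1]` and `Q = [1; -1]`,
`2 M = P (X + Y) Pᴴ + Q (X - Y) Qᴴ`, so `M` is positive semidefinite, and
`X = ((X + Y) + (X - Y)) / 2` is positive definite. The Schur complement of the block `X`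
in `M` is `X - Y X⁻¹ Y`, which is therefore positive semidefinite.
-/

open Matrix
open scoped ComplexOrder

variable {𝕜 n : Type*} [RCLike 𝕜]

namespace Matrix

lemma isHermitian_of_add_of_sub {A B : Matrix n n 𝕜} (h₁ : (A + B).IsHermitian)
    (h₂ : (A - B).IsHermitian) : B.IsHermitian := by
  have hB : B = (2 : ℝ)⁻¹ • ((A + B) - (A - B)) := by module
  rw [hB]
  exact IsSelfAdjoint.smul (.all _) (h₁.sub h₂)

lemma PosDef.of_add_of_sub {A B : Matrix n n 𝕜} (h₁ : (A + B).PosDef) (h₂ : (A - B).PosDef) :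
    A.PosDef := by
  have hA : A = (2 : ℝ)⁻¹ • ((A + B) + (A - B)) := by module
  rw [hA]
  exact (h₁.add h₂).smul (by norm_num)

variable [Fintype n] [DecidableEq n]

lemma two_smul_fromBlocks_eq (A B : Matrix n n 𝕜) :
    (2 : ℝ) • fromBlocks A B B A =
      (fromRows 1 1 : Matrix (n ⊕ n) n 𝕜) * (A + B) * (fromRows 1 1 : Matrix (n ⊕ n) n 𝕜)ᴴ +
        (fromRows 1 (-1) : Matrix (n ⊕ n) n 𝕜) * (A - B) *
          (fromRows 1 (-1) : Matrix (n ⊕ n) n 𝕜)ᴴ := by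
  simp only [conjTranspose_fromRows_eq_fromCols_conjTranspose, fromRows_mul, mul_fromCols,
    fromCols_fromRows_eq_fromBlocks, conjTranspose_one, conjTranspose_neg, fromBlocks_smul,
    fromBlocks_add]
  congr 1 <;> simp only [one_mul, mul_one, neg_mul, mul_neg] <;> module

lemma PosSemidef.fromBlocks_of_add_of_sub {A B : Matrix n n 𝕜} (h₁ : (A + B).PosSemidef)
    (h₂ : (A - B).PosSemidef) : (fromBlocks A B B A).PosSemidef := by
  have h := ((h₁.mul_mul_conjTranspose_same (fromRows 1 1 : Matrix (n ⊕ n) n 𝕜)).add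
    (h₂.mul_mul_conjTranspose_same (fromRows 1 (-1) : Matrix (n ⊕ n) n 𝕜))).smul
    (show (0 : ℝ) ≤ 2⁻¹ by norm_num)
  rwa [← two_smul_fromBlocks_eq, smul_smul, inv_mul_cancel₀ two_ne_zero, one_smul] at h

lemma PosDef.posSemidef_sub_mul_inv_mul {A B : Matrix n n 𝕜} (hA : A.PosDef)
    (h₁ : (A + B).PosSemidef) (h₂ : (A - B).PosSemidef) : (A - B * A⁻¹ * B).PosSemidef := by
  have : Invertible A := hA.isUnit.invertible
  have hB : Bᴴ = B := (isHermitian_of_add_of_sub h₁.isHermitian h₂.isHermitian).eq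
  have h := (hA.fromBlocks₁₁ B A).mp (by rw [hB]; exact .fromBlocks_of_add_of_sub h₁ h₂)
  rwa [hB] at h

end Matrix

theorem stmt_2_general (L : ℕ) (X Y : Matrix (Fin L) (Fin L) ℝ)
    (h1 : (X + Y).PosDef) (h2 : (X - Y).PosDef) :
    X.PosDef ∧ (X - Y * X⁻¹ * Y).PosSemidef := by
  have hX := PosDef.of_add_of_sub h1 h2
  exact ⟨hX, hX.posSemidef_sub_mul_inv_mul h1.posSemidef h2.posSemidef⟩

/-- If X + Y and X − Y are positive definite (X, Y symmetric), then X is positive definite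
and X − Y X⁻¹ Y is positive semidefinite. -/
theorem stmt_2 (L : ℕ) (X Y : Matrix (Fin L) (Fin L) ℝ)
    (hX : X.IsSymm) (hY : Y.IsSymm)
    (h1 : (X + Y).PosDef) (h2 : (X - Y).PosDef) :
    X.PosDef ∧ (X - Y * X⁻¹ * Y).PosSemidef :=
  stmt_2_general L X Y h1 h2
end

section
/- Fix integers L ≥ 1 and m ≥ 2 and define G(X₁, …, Xₘ) = X₁ − Σ_{i=2}^{m} Xᵢ X₁⁻¹ Xᵢᵀ for tuples of real L×L matrices with X₁ symmetric positive definite. Then G is concave with respect to the Loewner order: for any two tuples (X₁, …, Xₘ) and (X₁', …, Xₘ') with X₁ and X₁' symmetric positive definite and any t ∈ [0, 1], the matrix G(t·X₁ + (1 − t)·X₁', …, t·Xₘ + (1 − t)·Xₘ') − t·G(X₁, …, Xₘ) − (1 − t)·G(X₁', …, Xₘ') is positive semidefinite. -/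
open Matrix

/-- G(X₁, …, Xₘ) = X₁ − Σ_{i=2}^m Xᵢ X₁⁻¹ Xᵢᵀ on tuples of real L×L matrices with X₁
symmetric positive definite. -/
noncomputable def Garrow (L m : ℕ) [NeZero m]
    (Z : Fin m → Matrix (Fin L) (Fin L) ℝ) : Matrix (Fin L) (Fin L) ℝ :=
  Z 0 - ∑ i ∈ Finset.univ.erase (0 : Fin m), Z i * (Z 0)⁻¹ * (Z i)ᵀ

/-!
Each term `P Y⁻¹ Pᵀ` is the Loewner maximum over `R` of `P Rᵀ + R Pᵀ − R Y Rᵀ`, since the gap is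
`(P − R Y) Y⁻¹ (P − R Y)ᵀ ⪰ 0` and vanishes at `R = P Y⁻¹`. These minorants are linear in
`(P, Y)`, so `(P, Y) ↦ P Y⁻¹ Pᵀ` is jointly convex: take `R` optimal for the convex combination
and compare with each endpoint. Hence `G`, which is linear in `X₁` minus a sum of such terms,
is concave.
-/

namespace Matrix

variable {n k : Type*}

lemma PosDef.transpose_eq_self {Y : Matrix n n ℝ} (hY : Y.PosDef) : Yᵀ = Y := by
  simpa [conjTranspose_eq_transpose_of_trivial] using hY.isHermitian.eq

lemma PosDef.smul_add_smul {A B : Matrix n n ℝ} (hA : A.PosDef) (hB : B.PosDef)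
    {a b : ℝ} (ha : 0 ≤ a) (hb : 0 ≤ b) (hab : a + b = 1) : (a • A + b • B).PosDef := by
  rcases ha.eq_or_lt with rfl | ha
  · simpa [show b = 1 by linarith] using hB
  · exact (hA.smul ha).add_posSemidef (hB.posSemidef.smul hb)

variable [Fintype n]

def affineMinorant (R P : Matrix k n ℝ) (Y : Matrix n n ℝ) : Matrix k k ℝ :=
  P * Rᵀ + R * Pᵀ - R * Y * Rᵀ

lemma affineMinorant_smul_add_smul (R P P' : Matrix k n ℝ) (Y Y' : Matrix n n ℝ) (a b : ℝ) :
    affineMinorant R (a • P + b • P') (a • Y + b • Y') =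
      a • affineMinorant R P Y + b • affineMinorant R P' Y' := by
  simp only [affineMinorant, transpose_add, transpose_smul, Matrix.add_mul, Matrix.mul_add,
    Matrix.smul_mul, Matrix.mul_smul, smul_add, smul_sub]
  abel

variable [DecidableEq n]

lemma PosDef.mul_inv_mul_transpose_sub_affineMinorant {Y : Matrix n n ℝ} (hY : Y.PosDef)
    (R P : Matrix k n ℝ) :
    P * Y⁻¹ * Pᵀ - affineMinorant R P Y = (P - R * Y) * Y⁻¹ * (P - R * Y)ᵀ := by
  have hdet : IsUnit Y.det := hY.isUnit.map detMonoidHom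
  rw [affineMinorant, transpose_sub, transpose_mul, hY.transpose_eq_self]
  simp only [Matrix.sub_mul, Matrix.mul_sub, Matrix.mul_assoc, nonsing_inv_mul_cancel_left _ _ hdet,
    mul_nonsing_inv_cancel_left _ _ hdet]
  abel

lemma PosDef.affineMinorant_mul_inv {Y : Matrix n n ℝ} (hY : Y.PosDef) (P : Matrix k n ℝ) :
    affineMinorant (P * Y⁻¹) P Y = P * Y⁻¹ * Pᵀ := by
  have hdet : IsUnit Y.det := hY.isUnit.map detMonoidHom
  refine (sub_eq_zero.1 ?_).symm
  rw [hY.mul_inv_mul_transpose_sub_affineMinorant, nonsing_inv_mul_cancel_right _ _ hdet,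
    sub_self, Matrix.zero_mul, Matrix.zero_mul]

variable [Finite k]

lemma PosDef.posSemidef_mul_inv_mul_transpose_sub_affineMinorant {Y : Matrix n n ℝ}
    (hY : Y.PosDef) (R P : Matrix k n ℝ) :
    (P * Y⁻¹ * Pᵀ - affineMinorant R P Y).PosSemidef := by
  rw [hY.mul_inv_mul_transpose_sub_affineMinorant]
  simpa [conjTranspose_eq_transpose_of_trivial] using
    hY.inv.posSemidef.mul_mul_conjTranspose_same (P - R * Y)

theorem posSemidef_smul_add_smul_sub_mul_inv_mul_transpose {Y Y' : Matrix n n ℝ}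
    (hY : Y.PosDef) (hY' : Y'.PosDef) (P P' : Matrix k n ℝ) {a b : ℝ} (ha : 0 ≤ a) (hb : 0 ≤ b)
    (hab : a + b = 1) :
    (a • (P * Y⁻¹ * Pᵀ) + b • (P' * Y'⁻¹ * P'ᵀ)
      - (a • P + b • P') * (a • Y + b • Y')⁻¹ * (a • P + b • P')ᵀ).PosSemidef := by
  set R := (a • P + b • P') * (a • Y + b • Y')⁻¹
  have hR : (a • P + b • P') * (a • Y + b • Y')⁻¹ * (a • P + b • P')ᵀ =
      a • affineMinorant R P Y + b • affineMinorant R P' Y' := by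
    rw [← (hY.smul_add_smul hY' ha hb hab).affineMinorant_mul_inv, affineMinorant_smul_add_smul]
  have hsplit : ∀ A B C D : Matrix k k ℝ,
      a • A + b • B - (a • C + b • D) = a • (A - C) + b • (B - D) := by
    intros
    simp only [smul_sub]
    abel
  rw [hR, hsplit]
  exact ((hY.posSemidef_mul_inv_mul_transpose_sub_affineMinorant R P).smul ha).add
    ((hY'.posSemidef_mul_inv_mul_transpose_sub_affineMinorant R P').smul hb)

end Matrix

lemma Garrow_smul_add_smul_sub (L m : ℕ) [NeZero m] (X X' : Fin m → Matrix (Fin L) (Fin L) ℝ)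
    (a b : ℝ) :
    Garrow L m (fun i => a • X i + b • X' i) - a • Garrow L m X - b • Garrow L m X' =
      ∑ i ∈ Finset.univ.erase (0 : Fin m),
        (a • (X i * (X 0)⁻¹ * (X i)ᵀ) + b • (X' i * (X' 0)⁻¹ * (X' i)ᵀ)
          - (a • X i + b • X' i) * (a • X 0 + b • X' 0)⁻¹ * (a • X i + b • X' i)ᵀ) := by
  simp only [Garrow, Finset.smul_sum, smul_sub, Finset.sum_sub_distrib, Finset.sum_add_distrib]
  abel

theorem stmt_6_general (L m : ℕ) [NeZero m]
    (X X' : Fin m → Matrix (Fin L) (Fin L) ℝ)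
    (hXpd : (X 0).PosDef) (hX'pd : (X' 0).PosDef)
    (t : ℝ) (ht0 : 0 ≤ t) (ht1 : t ≤ 1) :
    (Garrow L m (fun i => t • X i + (1 - t) • X' i)
      - t • Garrow L m X - (1 - t) • Garrow L m X').PosSemidef := by
  rw [Garrow_smul_add_smul_sub]
  exact posSemidef_sum _ fun i _ => posSemidef_smul_add_smul_sub_mul_inv_mul_transpose
    hXpd hX'pd (X i) (X' i) ht0 (sub_nonneg.2 ht1) (add_sub_cancel t 1)

/-- G is concave with respect to the Loewner order on tuples whose first entry is
symmetric positive definite. -/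
theorem stmt_6 (L m : ℕ) (hL : 1 ≤ L) [NeZero m] (hm : 2 ≤ m)
    (X X' : Fin m → Matrix (Fin L) (Fin L) ℝ)
    (hX0 : (X 0).IsSymm) (hX0' : (X' 0).IsSymm)
    (hXpd : (X 0).PosDef) (hX'pd : (X' 0).PosDef)
    (t : ℝ) (ht0 : 0 ≤ t) (ht1 : t ≤ 1) :
    (Garrow L m (fun i => t • X i + (1 - t) • X' i)
      - t • Garrow L m X - (1 - t) • Garrow L m X').PosSemidef :=
  stmt_6_general L m X X' hXpd hX'pd t ht0 ht1
end

section
/- Fix integers L ≥ 1 and m ≥ 2. For a real symmetric L×L matrix A and real symmetric L×L matrices B₂, …, Bₘ, let M(A, B₂, …, Bₘ) be the mL×mL block matrix whose m diagonal L×L blocks all equal A, whose (1, j) and (j, 1) blocks equal Bⱼ for each j ∈ {2, …, m}, and whose remaining blocks are zero. Then the set of tuples (A, B₂, …, Bₘ) of real symmetric L×L matrices for which M(A, B₂, …, Bₘ) is positive semidefinite equals the closure (in the Euclidean topology on tuples of matrices) of the set of tuples for which A is positive definite and A − Σ_{j=2}^{m} Bⱼ A⁻¹ Bⱼ is positive definite.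 -/
/-!
Reorder the blocks of `M` so that block `0` comes last: `M` becomes `fromBlocks (A ⊗ₖ 1) C Cᴴ A`,
where the column `C` stacks `B₂, …, Bₘ`, and the Schur complement of the corner `A ⊗ₖ 1` is
`A - ∑ Bⱼ A⁻¹ Bⱼ`. So for positive definite `A`, `M` is positive semidefinite iff this Schur
complement is; as the semidefinite set is closed, it contains the closure. Conversely, replacing
`A` by `A + ε • 1` adds `ε • 1` to `M`, which makes it positive definite; then its principal block
`A + ε • 1` and the Schur complement are positive definite, and `ε → 0⁺` puts the tuple in the
closure.
-/

open Matrix Filter Topology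
open scoped Kronecker ComplexOrder

namespace Matrix

variable {𝕜 n o : Type*} [RCLike 𝕜] [Fintype n] [Fintype o]

theorem isClosed_setOf_posSemidef_s9 : IsClosed {M : Matrix n n 𝕜 | M.PosSemidef} := by
  simp only [posSemidef_iff_dotProduct_mulVec, Set.ofPred_and, Set.ofPred_forall]
  exact (isClosed_eq continuous_id.matrix_conjTranspose continuous_id).inter <|
    isClosed_iInter fun x => isClosed_le continuous_const <|
      continuous_const.dotProduct (continuous_id.matrix_mulVec continuous_const)

theorem PosDef.schur_complement_of_fromBlocks₁₁ [DecidableEq n] {A : Matrix n n 𝕜}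
    {B : Matrix n o 𝕜} {D : Matrix o o 𝕜} (hA : A.PosDef) [Invertible A]
    (h : (fromBlocks A B Bᴴ D).PosDef) :
    (D - Bᴴ * A⁻¹ * B).PosDef := by
  classical
  have hS := (PosDef.fromBlocks₁₁ B D hA).1 h.posSemidef
  refine hS.posDef_iff_det_ne_zero.2 fun h0 => ?_
  have := ((isUnit_iff_isUnit_det _).1 h.isUnit).ne_zero
  rw [det_fromBlocks₁₁, invOf_eq_nonsing_inv, h0, mul_zero] at this
  exact this rfl

end Matrix

section Arrowhead

variable {L m : ℕ} [NeZero m]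

def arrowhead (Z : Fin m → Matrix (Fin L) (Fin L) ℝ) : Matrix (Fin m × Fin L) (Fin m × Fin L) ℝ :=
  of fun p q =>
    if p.1 = q.1 then Z 0 p.2 q.2
    else if p.1 = 0 then Z q.1 p.2 q.2
    else if q.1 = 0 then Z p.1 p.2 q.2
    else 0

def arrowColumn (Z : Fin m → Matrix (Fin L) (Fin L) ℝ) :
    Matrix (Fin L × {j : Fin m // j ≠ 0}) (Fin L) ℝ :=
  of fun p k => Z p.2 p.1 k

def arrowCorner (Z : Fin m → Matrix (Fin L) (Fin L) ℝ) :
    Matrix (Fin L × {j : Fin m // j ≠ 0}) (Fin L × {j : Fin m // j ≠ 0}) ℝ :=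
  Z 0 ⊗ₖ 1

def arrowEquiv (L m : ℕ) [NeZero m] : (Fin L × {j : Fin m // j ≠ 0}) ⊕ Fin L ≃ Fin m × Fin L where
  toFun := Sum.elim (fun p => (p.2, p.1)) (fun k => (0, k))
  invFun p := if h : p.1 = 0 then .inr p.2 else .inl (p.2, ⟨p.1, h⟩)
  left_inv := by
    rintro (⟨l, j, hj⟩ | k)
    · simp [hj]
    · simp
  right_inv := by rintro ⟨j, l⟩; by_cases h : j = 0 <;> simp [h]

theorem continuous_arrowhead :
    Continuous (arrowhead : (Fin m → Matrix (Fin L) (Fin L) ℝ) → _) := by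
  refine continuous_matrix fun p q => ?_
  simp only [arrowhead, of_apply]
  split_ifs <;> fun_prop

theorem isClosed_setOf_isSymm_arrowhead_posSemidef :
    IsClosed {Z : Fin m → Matrix (Fin L) (Fin L) ℝ |
      (∀ i, (Z i).IsSymm) ∧ (arrowhead Z).PosSemidef} := by
  rw [Set.ofPred_and, Set.ofPred_forall]
  exact (isClosed_iInter fun i =>
      isClosed_eq (continuous_apply i).matrix_transpose (continuous_apply i)).inter
    (isClosed_setOf_posSemidef_s9.preimage continuous_arrowhead)

variable {Z : Fin m → Matrix (Fin L) (Fin L) ℝ}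

theorem arrowhead_submatrix_arrowEquiv (hZ : ∀ i, (Z i).IsSymm) :
    (arrowhead Z).submatrix (arrowEquiv L m) (arrowEquiv L m) =
      fromBlocks (arrowCorner Z) (arrowColumn Z) (arrowColumn Z)ᴴ (Z 0) := by
  ext (⟨l, j, hj⟩ | k) (⟨l', j', hj'⟩ | k')
  · by_cases h : j = j' <;>
      simp [arrowhead, arrowCorner, arrowEquiv, hj, hj', h, one_apply, Subtype.ext_iff]
  · simp [arrowhead, arrowColumn, arrowEquiv, hj]
  · simp [arrowhead, arrowColumn, arrowEquiv, hj'.symm, (hZ j').apply]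
  · simp [arrowhead, arrowEquiv]

theorem posDef_arrowCorner (hA : (Z 0).PosDef) : (arrowCorner Z).PosDef :=
  hA.kronecker PosDef.one

theorem arrowhead_submatrix_zero :
    (arrowhead Z).submatrix (Prod.mk 0) (Prod.mk 0) = Z 0 := by
  ext k k'
  simp [arrowhead]

theorem conjTranspose_arrowColumn_mul_inv_mul (hZ : ∀ i, (Z i).IsSymm) :
    (arrowColumn Z)ᴴ * (arrowCorner Z)⁻¹ * arrowColumn Z =
      ∑ j ∈ Finset.univ.erase 0, Z j * (Z 0)⁻¹ * Z j := by
  rw [arrowCorner, inv_kronecker, inv_one,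
    Finset.sum_subtype (p := (· ≠ 0)) (F := inferInstance) _ fun j => by simp]
  ext k k'
  simp only [mul_apply, conjTranspose_apply, kroneckerMap_apply, one_apply, arrowColumn, of_apply,
    Fintype.sum_prod_type, Matrix.sum_apply, star_trivial, Finset.sum_mul, mul_ite, mul_one,
    mul_zero, Finset.sum_ite_eq', Finset.mem_univ, if_true]
  rw [Finset.sum_comm]
  refine Finset.sum_congr rfl fun j _ => ?_
  simp only [(hZ j).apply k]

theorem arrowhead_update_zero_add_smul_one (ε : ℝ) :
    arrowhead (Function.update Z 0 (Z 0 + ε • 1)) = arrowhead Z + ε • 1 := by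
  ext ⟨i, k⟩ ⟨i', k'⟩
  simp only [arrowhead, of_apply, Matrix.add_apply, Matrix.smul_apply, one_apply, Prod.mk.injEq,
    Function.update_apply]
  split_ifs <;> simp_all

theorem arrowhead_posSemidef_iff (hZ : ∀ i, (Z i).IsSymm) (hA : (Z 0).PosDef) :
    (arrowhead Z).PosSemidef ↔
      (Z 0 - ∑ j ∈ Finset.univ.erase 0, Z j * (Z 0)⁻¹ * Z j).PosSemidef := by
  have hD := posDef_arrowCorner hA
  have := hD.isUnit.invertible
  rw [← posSemidef_submatrix_equiv (arrowEquiv L m), arrowhead_submatrix_arrowEquiv hZ,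
    PosDef.fromBlocks₁₁ _ _ hD, conjTranspose_arrowColumn_mul_inv_mul hZ]

theorem posDef_schur_of_posDef_arrowhead (hZ : ∀ i, (Z i).IsSymm) (hA : (Z 0).PosDef)
    (h : (arrowhead Z).PosDef) :
    (Z 0 - ∑ j ∈ Finset.univ.erase 0, Z j * (Z 0)⁻¹ * Z j).PosDef := by
  have hD := posDef_arrowCorner hA
  have := hD.isUnit.invertible
  have h' := h.submatrix (arrowEquiv L m).injective
  rw [arrowhead_submatrix_arrowEquiv hZ] at h'
  simpa only [conjTranspose_arrowColumn_mul_inv_mul hZ] using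
    hD.schur_complement_of_fromBlocks₁₁ h'

theorem update_zero_add_smul_one_of_arrowhead_posSemidef (hZ : ∀ i, (Z i).IsSymm)
    (hM : (arrowhead Z).PosSemidef) {ε : ℝ} (hε : 0 < ε) :
    let W := Function.update Z 0 (Z 0 + ε • 1)
    (∀ i, (W i).IsSymm) ∧ (W 0).PosDef ∧
      (W 0 - ∑ j ∈ Finset.univ.erase 0, W j * (W 0)⁻¹ * W j).PosDef := by
  intro W
  have hW : ∀ i, (W i).IsSymm := by
    intro i
    rcases eq_or_ne i 0 with rfl | hi
    · simp [W, IsSymm, transpose_add, (hZ 0).eq]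
    · simpa [W, hi] using hZ i
  have hMW : (arrowhead W).PosDef := by
    rw [arrowhead_update_zero_add_smul_one]
    exact PosDef.posSemidef_add hM (PosDef.one.smul hε)
  have hA : (W 0).PosDef := by
    simpa only [arrowhead_submatrix_zero] using hMW.submatrix (Prod.mk_right_injective 0)
  exact ⟨hW, hA, posDef_schur_of_posDef_arrowhead hW hA hMW⟩

end Arrowhead

theorem stmt_9_general (L m : ℕ) [NeZero m] :
    {Z : Fin m → Matrix (Fin L) (Fin L) ℝ | (∀ i, (Z i).IsSymm) ∧
      (Matrix.of fun p q : Fin m × Fin L =>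
        if p.1 = q.1 then Z 0 p.2 q.2
        else if p.1 = 0 then Z q.1 p.2 q.2
        else if q.1 = 0 then Z p.1 p.2 q.2
        else 0).PosSemidef} =
    closure {Z : Fin m → Matrix (Fin L) (Fin L) ℝ | (∀ i, (Z i).IsSymm) ∧
      (Z 0).PosDef ∧
      (Z 0 - ∑ j ∈ Finset.univ.erase (0 : Fin m),
        Z j * (Z 0)⁻¹ * Z j).PosDef} := by
  refine subset_antisymm ?_ (closure_minimal ?_ isClosed_setOf_isSymm_arrowhead_posSemidef)
  · rintro Z ⟨hZ, hM⟩
    have hlim : Tendsto (fun ε : ℝ => Function.update Z 0 (Z 0 + ε • 1)) (𝓝[>] 0) (𝓝 Z) := by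
      refine tendsto_nhdsWithin_of_tendsto_nhds (Continuous.tendsto' ?_ _ _ (by simp))
      fun_prop
    exact mem_closure_of_tendsto hlim <| eventually_nhdsWithin_of_forall fun ε hε =>
      update_zero_add_smul_one_of_arrowhead_posSemidef hZ hM hε
  · rintro Z ⟨hZ, hA, hS⟩
    exact ⟨hZ, (arrowhead_posSemidef_iff hZ hA).2 hS.posSemidef⟩

/-- The set of tuples (A, B₂, …, Bₘ) of symmetric matrices whose block arrowhead matrix is
positive semidefinite equals the closure of the set of tuples with A positive definite and
A − Σ_{j=2}^m Bⱼ A⁻¹ Bⱼ positive definite. -/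
theorem stmt_9 (L m : ℕ) (hL : 1 ≤ L) [NeZero m] (hm : 2 ≤ m) :
    {Z : Fin m → Matrix (Fin L) (Fin L) ℝ | (∀ i, (Z i).IsSymm) ∧
      (Matrix.of fun p q : Fin m × Fin L =>
        if p.1 = q.1 then Z 0 p.2 q.2
        else if p.1 = 0 then Z q.1 p.2 q.2
        else if q.1 = 0 then Z p.1 p.2 q.2
        else 0).PosSemidef} =
    closure {Z : Fin m → Matrix (Fin L) (Fin L) ℝ | (∀ i, (Z i).IsSymm) ∧
      (Z 0).PosDef ∧
      (Z 0 - ∑ j ∈ Finset.univ.erase (0 : Fin m),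
        Z j * (Z 0)⁻¹ * Z j).PosDef} :=
  stmt_9_general L m
end

section
/- Fix integers m ≥ 2 and U, L ≥ 1 and a real U×L matrix P. Define Λ(s) = Pᵀ Diag(s) P for s ∈ ℝ^U and Λ*(S) = diag(P S Pᵀ) for real L×L matrices S. Define K ⊆ (ℝ^U)^m as the set of tuples (s₁, …, sₘ) such that there exist real symmetric positive semidefinite L×L matrices S₁ and S_{i,+}, S_{i,−} for i ∈ {2, …, m} with s₁ = Λ*(S₁) + Σ_{i=2}^{m} Λ*(S_{i,+} + S_{i,−}) and sᵢ = Λ*(S_{i,+}) − Λ*(S_{i,−}) for each i ∈ {2, …, m}. Then the dual cone of K with respect to the inner product ⟨(s₁,…,sₘ), (t₁,…,tₘ)⟩ = Σ_{i=1}^{m} ⟨sᵢ, tᵢ⟩ equals the set of tuples (s₁, …, sₘ) such that Λ(s₁ + sᵢ) and Λ(s₁ − sᵢ) are positive semidefinite for every i ∈ {2, …, m}. -/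
/-!
`Λ*(S) = diag(P S Pᵀ)` is the adjoint of `Λ(t) = Pᵀ Diag(t) P` for the trace pairing, so pairing a
point of `K` with `t` gives `tr(Λ(t₁) S₁) + ∑ᵢ (tr(Λ(t₁ + tᵢ) S_{i,+}) + tr(Λ(t₁ - tᵢ) S_{i,-}))`.
As the PSD cone is self-dual, this is nonnegative for all PSD blocks iff `Λ(t₁)` and all
`Λ(t₁ ± tᵢ)` are PSD, and `Λ(t₁) = (Λ(t₁ + tᵢ) + Λ(t₁ - tᵢ)) / 2` is then automatic since `m ≥ 2`.
-/

open Matrix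

namespace Matrix

section RCLike

open scoped ComplexOrder

variable {𝕜 n : Type*} [RCLike 𝕜] [Fintype n]

open scoped MatrixOrder in
theorem PosSemidef.trace_mul_nonneg {A B : Matrix n n 𝕜} (hA : A.PosSemidef)
    (hB : B.PosSemidef) : 0 ≤ (A * B).trace := by
  classical
  obtain ⟨C, rfl⟩ := CStarAlgebra.nonneg_iff_eq_star_mul_self.mp hA.nonneg
  rw [star_eq_conjTranspose, Matrix.mul_assoc, trace_mul_comm, Matrix.mul_assoc,
    ← Matrix.mul_assoc]
  exact (hB.mul_mul_conjTranspose_same C).trace_nonneg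

theorem IsHermitian.posSemidef_iff_forall_trace_mul_nonneg {A : Matrix n n 𝕜}
    (hA : A.IsHermitian) :
    A.PosSemidef ↔ ∀ B : Matrix n n 𝕜, B.PosSemidef → 0 ≤ (A * B).trace := by
  classical
  refine ⟨fun hA' _ hB => hA'.trace_mul_nonneg hB,
    fun h => .of_dotProduct_mulVec_nonneg hA fun x => ?_⟩
  simpa [mul_vecMulVec, trace_vecMulVec, dotProduct_comm] using
    h _ (posSemidef_vecMulVec_self_star x)

end RCLike

theorem diag_mul_mul_transpose_dotProduct {R u l : Type*} [CommSemiring R] [Fintype u]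
    [DecidableEq u] [Fintype l] (P : Matrix u l R) (S : Matrix l l R) (t : u → R) :
    (P * S * Pᵀ).diag ⬝ᵥ t = (Pᵀ * diagonal t * P * S).trace := by
  have diag_dotProduct (A : Matrix u u R) : A.diag ⬝ᵥ t = (A * diagonal t).trace := by
    simp [dotProduct, trace, mul_diagonal]
  rw [diag_dotProduct, trace_mul_cycle, trace_mul_cycle]
  simp only [Matrix.mul_assoc]

theorem posSemidef_transpose_mul_diagonal_mul_of_add_of_sub {u l : Type*} [Fintype u]
    [DecidableEq u] {P : Matrix u l ℝ} {a b : u → ℝ}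
    (h₁ : (Pᵀ * diagonal (a + b) * P).PosSemidef) (h₂ : (Pᵀ * diagonal (a - b) * P).PosSemidef) :
    (Pᵀ * diagonal a * P).PosSemidef := by
  have : Pᵀ * diagonal a * P =
      (2 : ℝ)⁻¹ • (Pᵀ * diagonal (a + b) * P + Pᵀ * diagonal (a - b) * P) := by
    have : diagonal (a + b) + diagonal (a - b) = (2 : ℝ) • diagonal a := by
      rw [diagonal_add, ← diagonal_smul]
      congr 1
      ext
      simp only [Pi.add_apply, Pi.sub_apply, Pi.smul_apply, smul_eq_mul]
      ring
    rw [← Matrix.add_mul, ← Matrix.mul_add, this, Matrix.mul_smul, Matrix.smul_mul, smul_smul,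
      inv_mul_cancel₀ two_ne_zero, one_smul]
  rw [this]
  exact (h₁.add h₂).smul (by norm_num)

end Matrix

open Finset

section SOSCone

variable {ι u l : Type*} [Fintype ι] [DecidableEq ι] [Fintype u] [DecidableEq u] [Fintype l]

/-- `S₀`, `Sp i`, `Sm i` are the paper's `S₁`, `S_{i,+}`, `S_{i,-}`, and `i₀` is its index `1`. -/
def sosCone (i₀ : ι) (P : Matrix u l ℝ) : Set (ι → u → ℝ) :=
  {s | ∃ (S₀ : Matrix l l ℝ) (Sp Sm : ι → Matrix l l ℝ),
    S₀.PosSemidef ∧ (∀ i, i ≠ i₀ → (Sp i).PosSemidef ∧ (Sm i).PosSemidef) ∧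
    s i₀ = (P * S₀ * Pᵀ).diag + ∑ i ∈ univ.erase i₀, (P * (Sp i + Sm i) * Pᵀ).diag ∧
    ∀ i, i ≠ i₀ → s i = (P * Sp i * Pᵀ).diag - (P * Sm i * Pᵀ).diag}

def dualCone (K : Set (ι → u → ℝ)) : Set (ι → u → ℝ) :=
  {t | ∀ s ∈ K, 0 ≤ ∑ i, s i ⬝ᵥ t i}

theorem sum_dotProduct_eq_of_sosCone {i₀ : ι} {P : Matrix u l ℝ} {S₀ : Matrix l l ℝ}
    {Sp Sm : ι → Matrix l l ℝ} {s : ι → u → ℝ}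
    (hs₀ : s i₀ = (P * S₀ * Pᵀ).diag + ∑ i ∈ univ.erase i₀, (P * (Sp i + Sm i) * Pᵀ).diag)
    (hs : ∀ i, i ≠ i₀ → s i = (P * Sp i * Pᵀ).diag - (P * Sm i * Pᵀ).diag) (t : ι → u → ℝ) :
    ∑ i, s i ⬝ᵥ t i = (Pᵀ * diagonal (t i₀) * P * S₀).trace +
      ∑ i ∈ univ.erase i₀, ((Pᵀ * diagonal (t i₀ + t i) * P * Sp i).trace +
        (Pᵀ * diagonal (t i₀ - t i) * P * Sm i).trace) := by
  rw [← add_sum_erase _ _ (mem_univ i₀), hs₀, add_dotProduct, sum_dotProduct, add_assoc,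
    ← sum_add_distrib, diag_mul_mul_transpose_dotProduct]
  congr 1
  refine sum_congr rfl fun i hi => ?_
  rw [hs i (ne_of_mem_erase hi), ← diag_mul_mul_transpose_dotProduct,
    ← diag_mul_mul_transpose_dotProduct, Matrix.mul_add, Matrix.add_mul, diag_add]
  simp only [add_dotProduct, sub_dotProduct, dotProduct_add, dotProduct_sub]
  ring

theorem mem_dualCone_sosCone_iff {i₀ : ι} {P : Matrix u l ℝ} {t : ι → u → ℝ} :
    t ∈ dualCone (sosCone i₀ P) ↔
      ∀ (S₀ : Matrix l l ℝ) (Sp Sm : ι → Matrix l l ℝ), S₀.PosSemidef →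
        (∀ i, i ≠ i₀ → (Sp i).PosSemidef ∧ (Sm i).PosSemidef) →
        0 ≤ (Pᵀ * diagonal (t i₀) * P * S₀).trace +
          ∑ i ∈ univ.erase i₀, ((Pᵀ * diagonal (t i₀ + t i) * P * Sp i).trace +
            (Pᵀ * diagonal (t i₀ - t i) * P * Sm i).trace) := by
  constructor
  · intro ht S₀ Sp Sm hS₀ hS
    set s := Function.update (fun i => (P * Sp i * Pᵀ).diag - (P * Sm i * Pᵀ).diag) i₀
      ((P * S₀ * Pᵀ).diag + ∑ i ∈ univ.erase i₀, (P * (Sp i + Sm i) * Pᵀ).diag)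
    have hs₀ : s i₀ = _ := Function.update_self ..
    have hs : ∀ i, i ≠ i₀ → s i = _ := fun i hi => Function.update_of_ne hi ..
    rw [← sum_dotProduct_eq_of_sosCone hs₀ hs]
    exact ht s ⟨S₀, Sp, Sm, hS₀, hS, hs₀, hs⟩
  · rintro ht s ⟨S₀, Sp, Sm, hS₀, hS, hs₀, hs⟩
    rw [sum_dotProduct_eq_of_sosCone hs₀ hs]
    exact ht S₀ Sp Sm hS₀ hS

variable {i₀ : ι} {P : Matrix u l ℝ} {t : ι → u → ℝ}

theorem posSemidef_of_mem_dualCone_sosCone (ht : t ∈ dualCone (sosCone i₀ P)) {i : ι}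
    (hi : i ≠ i₀) :
    (Pᵀ * diagonal (t i₀ + t i) * P).PosSemidef ∧
      (Pᵀ * diagonal (t i₀ - t i) * P).PosSemidef := by
  have isHermitian (a : u → ℝ) : (Pᵀ * diagonal a * P).IsHermitian := by
    simpa [conjTranspose_eq_transpose_of_trivial] using
      isHermitian_conjTranspose_mul_mul P (isHermitian_diagonal a)
  have posSemidef_single {B : Matrix l l ℝ} (hB : B.PosSemidef) (j : ι) :
      (Pi.single i B : ι → Matrix l l ℝ) j |>.PosSemidef := by
    rcases eq_or_ne j i with rfl | hj
    · simpa
    · simpa [Pi.single_eq_of_ne hj] using PosSemidef.zero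
  have sum_single (f : ι → Matrix l l ℝ) (B : Matrix l l ℝ) :
      ∑ j ∈ univ.erase i₀, (f j * (Pi.single i B : ι → Matrix l l ℝ) j).trace =
        (f i * B).trace := by
    rw [sum_eq_single_of_mem i (mem_erase.2 ⟨hi, mem_univ i⟩) fun j _ hj => by
      simp [Pi.single_eq_of_ne hj], Pi.single_eq_same]
  constructor
  · refine (isHermitian _).posSemidef_iff_forall_trace_mul_nonneg.2 fun B hB => ?_
    simpa [sum_single] using mem_dualCone_sosCone_iff.1 ht 0 (Pi.single i B) 0 .zero
      fun j _ => ⟨posSemidef_single hB j, .zero⟩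
  · refine (isHermitian _).posSemidef_iff_forall_trace_mul_nonneg.2 fun B hB => ?_
    simpa [sum_single] using mem_dualCone_sosCone_iff.1 ht 0 0 (Pi.single i B) .zero
      fun j _ => ⟨.zero, posSemidef_single hB j⟩

theorem mem_dualCone_sosCone_of_posSemidef [Nontrivial ι]
    (h : ∀ i, i ≠ i₀ → (Pᵀ * diagonal (t i₀ + t i) * P).PosSemidef ∧
      (Pᵀ * diagonal (t i₀ - t i) * P).PosSemidef) :
    t ∈ dualCone (sosCone i₀ P) := by
  obtain ⟨i₁, hi₁⟩ := exists_ne i₀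
  have h₀ := posSemidef_transpose_mul_diagonal_mul_of_add_of_sub (h i₁ hi₁).1 (h i₁ hi₁).2
  refine mem_dualCone_sosCone_iff.2 fun S₀ Sp Sm hS₀ hS => ?_
  refine add_nonneg (h₀.trace_mul_nonneg hS₀) (sum_nonneg fun i hi => ?_)
  have hi := ne_of_mem_erase hi
  exact add_nonneg ((h i hi).1.trace_mul_nonneg (hS i hi).1)
    ((h i hi).2.trace_mul_nonneg (hS i hi).2)

end SOSCone

theorem stmt_12_general (m U L : ℕ) [NeZero m] (hm : 2 ≤ m)
    (P : Matrix (Fin U) (Fin L) ℝ) :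
    {t : Fin m → Fin U → ℝ | ∀ s ∈ {s : Fin m → Fin U → ℝ |
        ∃ (S1 : Matrix (Fin L) (Fin L) ℝ)
          (Sp Sm : Fin m → Matrix (Fin L) (Fin L) ℝ),
          S1.PosSemidef ∧
          (∀ i : Fin m, i ≠ 0 → (Sp i).PosSemidef ∧ (Sm i).PosSemidef) ∧
          s 0 = (P * S1 * Pᵀ).diag +
            ∑ i ∈ Finset.univ.erase (0 : Fin m), (P * (Sp i + Sm i) * Pᵀ).diag ∧
          ∀ i : Fin m, i ≠ 0 → s i = (P * Sp i * Pᵀ).diag - (P * Sm i * Pᵀ).diag},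
      0 ≤ ∑ i, s i ⬝ᵥ t i} =
    {s : Fin m → Fin U → ℝ | ∀ i : Fin m, i ≠ 0 →
      (Pᵀ * Matrix.diagonal (s 0 + s i) * P).PosSemidef ∧
      (Pᵀ * Matrix.diagonal (s 0 - s i) * P).PosSemidef} := by
  have : Nontrivial (Fin m) := Fin.nontrivial_iff_two_le.2 hm
  change dualCone (sosCone 0 P) = _
  ext t
  exact ⟨fun ht _ hi => posSemidef_of_mem_dualCone_sosCone ht hi,
    mem_dualCone_sosCone_of_posSemidef⟩

/-- The dual cone of the SOS-ℓ1 cone K (defined via Λ*(S) = diag(P S Pᵀ)) equals the set of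
tuples (s₁, …, sₘ) with Λ(s₁ + sᵢ) ⪰ 0 and Λ(s₁ − sᵢ) ⪰ 0 for all i ∈ {2, …, m},
where Λ(s) = Pᵀ Diag(s) P. -/
theorem stmt_12 (m U L : ℕ) [NeZero m] (hm : 2 ≤ m) (hU : 1 ≤ U) (hL : 1 ≤ L)
    (P : Matrix (Fin U) (Fin L) ℝ) :
    {t : Fin m → Fin U → ℝ | ∀ s ∈ {s : Fin m → Fin U → ℝ |
        ∃ (S1 : Matrix (Fin L) (Fin L) ℝ)
          (Sp Sm : Fin m → Matrix (Fin L) (Fin L) ℝ),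
          S1.PosSemidef ∧
          (∀ i : Fin m, i ≠ 0 → (Sp i).PosSemidef ∧ (Sm i).PosSemidef) ∧
          s 0 = (P * S1 * Pᵀ).diag +
            ∑ i ∈ Finset.univ.erase (0 : Fin m), (P * (Sp i + Sm i) * Pᵀ).diag ∧
          ∀ i : Fin m, i ≠ 0 → s i = (P * Sp i * Pᵀ).diag - (P * Sm i * Pᵀ).diag},
      0 ≤ ∑ i, s i ⬝ᵥ t i} =
    {s : Fin m → Fin U → ℝ | ∀ i : Fin m, i ≠ 0 →
      (Pᵀ * Matrix.diagonal (s 0 + s i) * P).PosSemidef ∧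
      (Pᵀ * Matrix.diagonal (s 0 - s i) * P).PosSemidef} :=
  stmt_12_general m U L hm P
end

section
/- Fix n ≥ 1 and m ≥ 2, and define the product ∘ on m-tuples of real polynomials in n variables by (p ∘ q)₁ = Σ_{j=1}^{m} pⱼ qⱼ and (p ∘ q)ᵢ = p₁ qᵢ + q₁ pᵢ for i ∈ {2, …, m}. Suppose q = (q₁, …, qₘ) is an m-tuple of real polynomials in n variables such that q = Σ_{k=1}^{N} p_k ∘ p_k for some N ∈ ℕ and m-tuples p_k of real polynomials in n variables. Then for every point x ∈ ℝⁿ, q₁(x) ≥ √(Σ_{i=2}^{m} qᵢ(x)²); that is, the evaluation of q at every point lies in the second-order cone. -/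
/-- The product ∘ on m-tuples of real polynomials in n variables:
(p ∘ q)₁ = Σⱼ pⱼ qⱼ and (p ∘ q)ᵢ = p₁ qᵢ + q₁ pᵢ for i ≥ 2. -/
noncomputable def polyCirc (n m : ℕ) [NeZero m]
    (p q : Fin m → MvPolynomial (Fin n) ℝ) : Fin m → MvPolynomial (Fin n) ℝ :=
  fun i => if i = 0 then ∑ j, p j * q j else p 0 * q i + q 0 * p i

/-!
Evaluation at `x` turns `∑ₖ pₖ ∘ pₖ` into `∑ₖ aₖ ∘ aₖ` with `aₖ ∈ ℝᵐ`. Writing `a = (t, v)`,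
the Jordan square `a ∘ a = (t² + ‖v‖², 2t v)` lies in the second-order cone because
`2|t|‖v‖ ≤ t² + ‖v‖²`, and the cone is closed under addition by the triangle inequality.
-/

open MvPolynomial

def secondOrderCone (E : Type*) [SeminormedAddCommGroup E] : AddSubmonoid (ℝ × E) where
  carrier := {y | ‖y.2‖ ≤ y.1}
  add_mem' {y z} hy hz := (norm_add_le _ _).trans (add_le_add hy hz)
  zero_mem' := by simp

theorem mem_secondOrderCone {E : Type*} [SeminormedAddCommGroup E] {y : ℝ × E} :
    y ∈ secondOrderCone E ↔ ‖y.2‖ ≤ y.1 :=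
  Iff.rfl

theorem jordanSq_mem_secondOrderCone {E : Type*} [SeminormedAddCommGroup E] [NormedSpace ℝ E]
    (t : ℝ) (v : E) : (t ^ 2 + ‖v‖ ^ 2, (2 * t) • v) ∈ secondOrderCone E := by
  rw [mem_secondOrderCone, norm_smul, Real.norm_eq_abs, abs_mul, abs_two]
  simpa only [sq_abs] using two_mul_le_add_sq |t| ‖v‖

section splitAt

variable {ι : Type*}

/-- The splitting `y = (y₁, ȳ)` of the paper, with `ȳ` carrying the Euclidean norm. -/
noncomputable def splitAt (i₀ : ι) : (ι → ℝ) →ₗ[ℝ] ℝ × EuclideanSpace ℝ {i // i ≠ i₀} :=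
  (LinearMap.proj i₀).prod
    ((WithLp.linearEquiv 2 ℝ _).symm.toLinearMap ∘ₗ LinearMap.funLeft ℝ ℝ Subtype.val)

@[simp]
theorem splitAt_fst (i₀ : ι) (y : ι → ℝ) : (splitAt i₀ y).1 = y i₀ :=
  rfl

@[simp]
theorem splitAt_snd_apply (i₀ : ι) (y : ι → ℝ) (i : {i // i ≠ i₀}) : (splitAt i₀ y).2 i = y i :=
  rfl

theorem norm_sq_splitAt_snd [Fintype ι] [DecidableEq ι] (i₀ : ι) (y : ι → ℝ) :
    ‖(splitAt i₀ y).2‖ ^ 2 = ∑ i ∈ Finset.univ.erase i₀, y i ^ 2 := by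
  rw [EuclideanSpace.real_norm_sq_eq]
  exact (Finset.sum_subtype _ (by simp) (fun i => y i ^ 2)).symm

theorem norm_splitAt_snd [Fintype ι] [DecidableEq ι] (i₀ : ι) (y : ι → ℝ) :
    ‖(splitAt i₀ y).2‖ = Real.sqrt (∑ i ∈ Finset.univ.erase i₀, y i ^ 2) := by
  rw [← norm_sq_splitAt_snd, Real.sqrt_sq (norm_nonneg _)]

end splitAt

theorem splitAt_eval_polyCirc_self {n m : ℕ} [NeZero m] (x : Fin n → ℝ)
    (p : Fin m → MvPolynomial (Fin n) ℝ) :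
    splitAt 0 (fun i => eval x (polyCirc n m p p i)) =
      (eval x (p 0) ^ 2 + ‖(splitAt 0 fun i => eval x (p i)).2‖ ^ 2,
        (2 * eval x (p 0)) • (splitAt 0 fun i => eval x (p i)).2) := by
  ext i
  · simp only [splitAt_fst, polyCirc, if_pos, norm_sq_splitAt_snd, map_sum, ← sq,
      map_pow]
    exact (Finset.add_sum_erase _ (fun i => eval x (p i) ^ 2) (Finset.mem_univ 0)).symm
  · simp only [splitAt_snd_apply, polyCirc, if_neg i.2, PiLp.smul_apply, smul_eq_mul, map_add,
      map_mul]
    ring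

theorem stmt_16_general (n m : ℕ) [NeZero m]
    (q : Fin m → MvPolynomial (Fin n) ℝ)
    (N : ℕ) (p : Fin N → Fin m → MvPolynomial (Fin n) ℝ)
    (hq : q = ∑ k, polyCirc n m (p k) (p k)) :
    ∀ x : Fin n → ℝ,
      Real.sqrt (∑ i ∈ Finset.univ.erase (0 : Fin m),
          (MvPolynomial.eval x (q i)) ^ 2) ≤
        MvPolynomial.eval x (q 0) := by
  intro x
  have hsum : splitAt 0 (fun i => eval x (q i)) =
      ∑ k, splitAt 0 (fun i => eval x (polyCirc n m (p k) (p k) i)) := by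
    rw [← map_sum]
    congr 1
    ext i
    simp [hq, Finset.sum_apply]
  have hmem : splitAt 0 (fun i => eval x (q i)) ∈ secondOrderCone _ := by
    rw [hsum]
    refine AddSubmonoid.sum_mem _ fun k _ => ?_
    rw [splitAt_eval_polyCirc_self]
    exact jordanSq_mem_secondOrderCone _ _
  simpa only [mem_secondOrderCone, norm_splitAt_snd, splitAt_fst] using hmem

/-- If q = Σₖ pₖ ∘ pₖ, then the evaluation of q at every point lies in the second-order
cone: q₁(x) ≥ √(Σ_{i=2}^m qᵢ(x)²). -/
theorem stmt_16 (n m : ℕ) (hn : 1 ≤ n) [NeZero m] (hm : 2 ≤ m)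
    (q : Fin m → MvPolynomial (Fin n) ℝ)
    (N : ℕ) (p : Fin N → Fin m → MvPolynomial (Fin n) ℝ)
    (hq : q = ∑ k, polyCirc n m (p k) (p k)) :
    ∀ x : Fin n → ℝ,
      Real.sqrt (∑ i ∈ Finset.univ.erase (0 : Fin m),
          (MvPolynomial.eval x (q i)) ^ 2) ≤
        MvPolynomial.eval x (q 0) :=
  stmt_16_general n m q N p hq
end

section
/- Fix n ≥ 1 and m ≥ 1, and let Q be a symmetric m×m matrix whose entries are real polynomials in the variables x = (x₁, …, xₙ). Then the polynomial yᵀ Q(x) y in the n + m variables (x₁, …, xₙ, y₁, …, yₘ) is a sum of squares of polynomials if and only if there exist N ∈ ℕ and an N×m matrix M with entries real polynomials in x such that Q = Mᵀ M. -/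
/-!
Regard `yᵀ Q(x) y = ∑ₖ rₖ²` as an identity in `(ℝ[x])[y]`, a formally real ring. If some `rₖ`
had `y`-degree `d ≥ 2`, the degree-`2d` component of `∑ₖ rₖ²` would be the sum of the squares of
the degree-`d` components, hence nonzero; and the constant terms are squares summing to zero.
So every `rₖ` is a linear form `∑ᵢ Mₖᵢ yᵢ`, which gives `yᵀ Q y = yᵀ (Mᵀ M) y`. A symmetric matrix
is recovered from its quadratic form by differentiating twice, as `2` is not a zero divisor in
`ℝ[x]`. Conversely `yᵀ (Mᵀ M) y = ∑ₖ (∑ᵢ Mₖᵢ yᵢ)²`.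
-/

open Matrix MvPolynomial

theorem IsSumSq.map {R S F : Type*} [NonAssocSemiring R] [NonAssocSemiring S] [FunLike F R S]
    [RingHomClass F R S] (f : F) {s : R} (hs : IsSumSq s) : IsSumSq (f s) := by
  induction hs with
  | zero => simp
  | sq_add a _ ih => simpa using ih.sq_add (f a)

theorem IsFormallyReal.eq_zero_of_sum_sq_eq_zero {R ι : Type*} [CommRing R] [IsFormallyReal R]
    {s : Finset ι} {f : ι → R} (h : ∑ i ∈ s, f i ^ 2 = 0) : ∀ i ∈ s, f i = 0 := by
  classical
  induction s using Finset.induction_on with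
  | empty => simp
  | insert a s ha ih =>
    rw [Finset.sum_insert ha] at h
    have hsq : IsSumSq (∑ i ∈ s, f i ^ 2) := IsSumSq.sum_sq s f
    have ha0 : f a ^ 2 = 0 := eq_zero_of_add_right (IsSquare.sq (f a)).isSumSq hsq h
    have hs0 := eq_zero_of_add_left (IsSquare.sq (f a)).isSumSq hsq h
    simp only [Finset.mem_insert, forall_eq_or_imp]
    exact ⟨pow_eq_zero_iff two_ne_zero |>.mp ha0, ih hs0⟩

instance MvPolynomial.instIsFormallyReal {σ R : Type*} [CommRing R] [IsDomain R] [Infinite R]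
    [IsFormallyReal R] : IsFormallyReal (MvPolynomial σ R) :=
  IsFormallyReal.of_eq_zero_of_eq_zero_of_mul_self_add fun {s a} hs h => by
    refine MvPolynomial.funext fun x => ?_
    have hx : eval x a * eval x a + eval x s = 0 := by simpa using congrArg (eval x) h
    simpa using mul_self_eq_zero.mp
      (IsFormallyReal.eq_zero_of_add_right (.mul_self _) (hs.map (eval x)) hx)

namespace MvPolynomial

variable {σ : Type*}

section CommSemiring

variable {R : Type*} [CommSemiring R]

theorem homogeneousComponent_add_mul_of_totalDegree_le {p q : MvPolynomial σ R} {d e : ℕ}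
    (hp : p.totalDegree ≤ d) (hq : q.totalDegree ≤ e) :
    homogeneousComponent (d + e) (p * q) = homogeneousComponent d p * homogeneousComponent e q := by
  classical
  ext s
  rw [coeff_homogeneousComponent]
  split_ifs with hs
  · rw [coeff_mul, coeff_mul]
    refine Finset.sum_congr rfl fun ⟨a, b⟩ hab => ?_
    have hdeg : a.degree + b.degree = d + e := by
      rw [← map_add, Finset.HasAntidiagonal.mem_antidiagonal.mp hab, hs]
    simp only [coeff_homogeneousComponent]
    rcases lt_trichotomy a.degree d with ha | ha | ha
    · rw [coeff_eq_zero_of_totalDegree_lt (d := b) (by rw [← Finsupp.degree_apply]; omega)]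
      simp
    · simp [ha, show b.degree = e by omega]
    · rw [coeff_eq_zero_of_totalDegree_lt (d := a) (by rw [← Finsupp.degree_apply]; omega)]
      simp [ha.ne']
  · exact ((homogeneousComponent_isHomogeneous d p).mul
      (homogeneousComponent_isHomogeneous e q)).coeff_eq_zero hs |>.symm

theorem totalDegree_le_of_homogeneousComponent_eq_zero {p : MvPolynomial σ R} {d : ℕ}
    (hp : p.totalDegree ≤ d + 1) (h : homogeneousComponent (d + 1) p = 0) :
    p.totalDegree ≤ d := by
  refine Finset.sup_le fun s hs => ?_
  have hle : s.degree ≤ d + 1 := (le_totalDegree hs).trans hp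
  show s.degree ≤ d
  by_contra! hlt
  have := congrArg (coeff s) h
  rw [coeff_homogeneousComponent, if_pos (by omega), coeff_zero] at this
  exact (mem_support_iff.mp hs) this

theorem isHomogeneous_one_of_totalDegree_le_one {p : MvPolynomial σ R} (hp : p.totalDegree ≤ 1)
    (h0 : constantCoeff p = 0) : p.IsHomogeneous 1 := by
  intro s hs
  rw [Pi.one_def, ← Finsupp.degree_eq_weight_one]
  have hle : s.degree ≤ 1 := (le_totalDegree (mem_support_iff.mpr hs)).trans hp
  have hne : s.degree ≠ 0 := fun h => hs (by rwa [(Finsupp.degree_eq_zero_iff s).mp h])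
  omega

theorem aeval_C_X_apply {τ : Type*} (q : MvPolynomial σ R) :
    aeval (fun i => (C (X i) : MvPolynomial τ (MvPolynomial σ R))) q = C q := by
  induction q using MvPolynomial.induction_on <;> simp_all

end CommSemiring

section FormallyReal

variable {R : Type*} [CommRing R] [IsFormallyReal (MvPolynomial σ R)] {ι : Type*} [Fintype ι]

theorem totalDegree_le_one_of_isHomogeneous_sum_sq {g : ι → MvPolynomial σ R}
    (h : (∑ k, g k ^ 2).IsHomogeneous 2) (k : ι) : (g k).totalDegree ≤ 1 := by
  suffices ∀ d, (∀ k, (g k).totalDegree ≤ d) → ∀ k, (g k).totalDegree ≤ 1 from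
    this _ (fun k => Finset.le_sup (f := fun k => (g k).totalDegree) (Finset.mem_univ k)) k
  intro d
  induction d with
  | zero => exact fun hd k => (hd k).trans zero_le_one
  | succ d ih =>
    intro hd
    rcases Nat.eq_zero_or_pos d with rfl | hd0
    · exact hd
    have htop : ∑ k, homogeneousComponent (d + 1) (g k) ^ 2 = 0 := by
      have := homogeneousComponent_of_mem (m := (d + 1) + (d + 1)) h
      rw [if_neg (by omega), map_sum] at this
      simpa only [sq, homogeneousComponent_add_mul_of_totalDegree_le (hd _) (hd _)] using this
    exact ih fun k => totalDegree_le_of_homogeneousComponent_eq_zero (hd k)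
      (IsFormallyReal.eq_zero_of_sum_sq_eq_zero htop k (Finset.mem_univ k))

theorem constantCoeff_eq_zero_of_isHomogeneous_sum_sq {g : ι → MvPolynomial σ R}
    (h : (∑ k, g k ^ 2).IsHomogeneous 2) (k : ι) : constantCoeff (g k) = 0 := by
  have h0 : constantCoeff (∑ k, g k ^ 2) = 0 := h.coeff_eq_zero (by simp)
  have hconst : ∑ k, C (constantCoeff (g k)) ^ 2 = (0 : MvPolynomial σ R) := by
    rw [← map_zero C, ← h0]
    simp only [map_sum, map_pow]
  exact C_injective σ R <| by
    simpa using IsFormallyReal.eq_zero_of_sum_sq_eq_zero hconst k (Finset.mem_univ k)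

theorem isHomogeneous_one_of_isHomogeneous_sum_sq {g : ι → MvPolynomial σ R}
    (h : (∑ k, g k ^ 2).IsHomogeneous 2) (k : ι) : (g k).IsHomogeneous 1 :=
  isHomogeneous_one_of_totalDegree_le_one (totalDegree_le_one_of_isHomogeneous_sum_sq h k)
    (constantCoeff_eq_zero_of_isHomogeneous_sum_sq h k)

end FormallyReal

end MvPolynomial

namespace Matrix

variable {ι κ R : Type*} [Fintype ι] [Fintype κ] [CommSemiring R]

theorem sum_mul_mul_map_transpose_mul_apply {S F : Type*} [CommSemiring S] [FunLike F R S]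
    [RingHomClass F R S] (f : F) (v : ι → S) (M : Matrix κ ι R) :
    ∑ i, ∑ j, v i * v j * f ((Mᵀ * M) i j) = ∑ k, (∑ i, v i * f (M k i)) ^ 2 := by
  simp only [sq, Finset.sum_mul_sum]
  simp only [mul_apply, transpose_apply, map_sum, map_mul, Finset.mul_sum]
  rw [eq_comm, Finset.sum_comm]
  refine Finset.sum_congr rfl fun i _ => ?_
  rw [Finset.sum_comm]
  exact Finset.sum_congr rfl fun j _ => Finset.sum_congr rfl fun k _ => by ring

noncomputable def quadraticPoly (Q : Matrix ι ι R) : MvPolynomial ι R :=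
  ∑ i, ∑ j, X i * X j * C (Q i j)

theorem isHomogeneous_quadraticPoly (Q : Matrix ι ι R) : Q.quadraticPoly.IsHomogeneous 2 :=
  IsHomogeneous.sum _ _ _ fun i _ => IsHomogeneous.sum _ _ _ fun j _ =>
    ((isHomogeneous_X R i).mul (isHomogeneous_X R j)).mul (isHomogeneous_C _ _)

theorem quadraticPoly_transpose_mul (M : Matrix κ ι R) :
    (Mᵀ * M).quadraticPoly = ∑ k, (∑ i, X i * C (M k i)) ^ 2 :=
  sum_mul_mul_map_transpose_mul_apply C X M

theorem pderiv_pderiv_quadraticPoly [DecidableEq ι] (Q : Matrix ι ι R) (i j : ι) :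
    pderiv i (pderiv j Q.quadraticPoly) = C (Q i j + Q j i) := by
  simp [quadraticPoly, Pi.single_apply, Finset.sum_add_distrib, mul_add]

theorem IsSymm.eq_of_quadraticPoly_eq [IsAddTorsionFree R] {P Q : Matrix ι ι R} (hP : P.IsSymm)
    (hQ : Q.IsSymm) (h : P.quadraticPoly = Q.quadraticPoly) : P = Q := by
  classical
  ext i j
  have h2 := congrArg (fun p => pderiv i (pderiv j p)) h
  simp only [pderiv_pderiv_quadraticPoly, C_inj, hP.apply, hQ.apply, ← two_nsmul] at h2
  exact nsmul_right_injective two_ne_zero h2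

theorem IsSymm.exists_eq_transpose_mul_of_quadraticPoly_eq_sum_sq {R : Type*} [CommRing R]
    [IsAddTorsionFree R] [IsFormallyReal (MvPolynomial ι R)] {Q : Matrix ι ι R} (hQ : Q.IsSymm)
    {g : κ → MvPolynomial ι R} (h : Q.quadraticPoly = ∑ k, g k ^ 2) :
    ∃ M : Matrix κ ι R, Q = Mᵀ * M := by
  have hlin : ∀ k, ∃ c : ι → R, ∑ i, c i • X i = g k := fun k => by
    have hk := isHomogeneous_one_of_isHomogeneous_sum_sq (h ▸ isHomogeneous_quadraticPoly Q) k
    rw [← mem_homogeneousSubmodule, homogeneousSubmodule_one_eq_span_X] at hk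
    exact (Submodule.mem_span_range_iff_exists_fun R).mp hk
  choose M hM using hlin
  refine ⟨of M, hQ.eq_of_quadraticPoly_eq (transpose_mul _ _) ?_⟩
  rw [h, quadraticPoly_transpose_mul]
  simp only [of_apply, ← hM, smul_eq_C_mul, mul_comm]

end Matrix

theorem stmt_18_general (n m : ℕ)
    (Q : Matrix (Fin m) (Fin m) (MvPolynomial (Fin n) ℝ)) (hQ : Q.IsSymm) :
    (∃ (N : ℕ) (r : Fin N → MvPolynomial (Fin (n + m)) ℝ),
      (∑ i : Fin m, ∑ j : Fin m,
        MvPolynomial.X (Fin.natAdd n i) * MvPolynomial.X (Fin.natAdd n j) *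
          MvPolynomial.rename (Fin.castAdd m) (Q i j)) = ∑ k, (r k) ^ 2) ↔
    (∃ (N : ℕ) (M : Matrix (Fin N) (Fin m) (MvPolynomial (Fin n) ℝ)),
      Q = Mᵀ * M) := by
  constructor
  · rintro ⟨N, r, hr⟩
    let φ : MvPolynomial (Fin (n + m)) ℝ →ₐ[ℝ] MvPolynomial (Fin m) (MvPolynomial (Fin n) ℝ) :=
      aeval (Fin.addCases (fun j => C (X j)) X)
    have h : Q.quadraticPoly = ∑ k, φ (r k) ^ 2 := by
      simpa [φ, quadraticPoly, aeval_rename, Function.comp_def, aeval_C_X_apply] using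
        congrArg φ hr
    exact ⟨N, hQ.exists_eq_transpose_mul_of_quadraticPoly_eq_sum_sq h⟩
  · rintro ⟨N, M, rfl⟩
    exact ⟨N, fun k => ∑ i, X (Fin.natAdd n i) * rename (Fin.castAdd m) (M k i),
      sum_mul_mul_map_transpose_mul_apply (rename (Fin.castAdd m)) (fun i => X (Fin.natAdd n i)) M⟩

/-- For a symmetric m×m matrix Q of real polynomials in n variables, the polynomial
yᵀ Q(x) y in n + m variables is a sum of squares iff Q = Mᵀ M for some N×m matrix M of
polynomials in x. -/
theorem stmt_18 (n m : ℕ) (hn : 1 ≤ n) (hm : 1 ≤ m)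
    (Q : Matrix (Fin m) (Fin m) (MvPolynomial (Fin n) ℝ)) (hQ : Q.IsSymm) :
    (∃ (N : ℕ) (r : Fin N → MvPolynomial (Fin (n + m)) ℝ),
      (∑ i : Fin m, ∑ j : Fin m,
        MvPolynomial.X (Fin.natAdd n i) * MvPolynomial.X (Fin.natAdd n j) *
          MvPolynomial.rename (Fin.castAdd m) (Q i j)) = ∑ k, (r k) ^ 2) ↔
    (∃ (N : ℕ) (M : Matrix (Fin N) (Fin m) (MvPolynomial (Fin n) ℝ)),
      Q = Mᵀ * M) :=
  stmt_18_general n m Q hQ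
end

section
/- Let q = (q₁, q₂, q₃) be the triple of univariate real polynomials q₁ = 1 + x², q₂ = 1 − x², q₃ = 2x. Then: (a) for every x ∈ ℝ, q₁(x) ≥ √(q₂(x)² + q₃(x)²) (indeed q₁(x)² = q₂(x)² + q₃(x)² and q₁(x) > 0); (b) there exist N ∈ ℕ and an N×3 matrix M of real univariate polynomials with arrow(q) = Mᵀ M, where arrow(q) is the symmetric 3×3 polynomial matrix [[q₁, q₂, q₃], [q₂, q₁, 0], [q₃, 0, q₁]]; but (c) there is no N ∈ ℕ and no family of triples p_k = (p_{k,1}, p_{k,2}, p_{k,3}) of real univariate polynomials each of degree at most 1 such that q = Σ_{k=1}^{N} p_k ∘ p_k, where (p ∘ p)₁ = p₁² + p₂² + p₃², (p ∘ p)₂ = 2 p₁ p₂, (p ∘ p)₃ = 2 p₁ p₃. -/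
/-!
Parts (a) and (b) are direct computations. For (c), write each `pₖ = aₖ + bₖ x` with
`aₖ, bₖ ∈ ℝ³`. The constant coefficients of `q = Σ pₖ ∘ pₖ` give `Σ |aₖ|² = 1 = Σ 2 aₖ₁ aₖ₂`,
so `Σ ((aₖ₁ - aₖ₂)² + aₖ₃²) = 0` and every `aₖ₃` vanishes; the coefficients of `x²` give
`Σ |bₖ|² = 1 = -Σ 2 bₖ₁ bₖ₂` and likewise every `bₖ₃` vanishes. Hence every `pₖ₃ = 0`, which
forces `q₃ = 0`, not `2x`.
-/

open Polynomial Matrix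

/-- The product ∘ on triples of univariate real polynomials. -/
noncomputable def circ3 (p q : Fin 3 → Polynomial ℝ) : Fin 3 → Polynomial ℝ :=
  fun i => if i = 0 then ∑ j, p j * q j else p 0 * q i + q 0 * p i

open Finset

variable {ι : Type*} [Fintype ι]

theorem third_eq_zero_of_sum_sq_le_abs (a : ι → Fin 3 → ℝ)
    (h : ∑ k, ∑ j, a k j ^ 2 ≤ |∑ k, 2 * a k 0 * a k 1|) (k : ι) : a k 2 = 0 := by
  have hbound : ∀ σ : ℝ, σ ^ 2 = 1 →
      ∑ k, a k 2 ^ 2 ≤ ∑ k, ∑ j, a k j ^ 2 - σ * ∑ k, 2 * a k 0 * a k 1 := by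
    intro σ hσ
    rw [mul_sum, ← sum_sub_distrib]
    refine sum_le_sum fun k _ => ?_
    rw [Fin.sum_univ_three]
    nlinarith [sq_nonneg (a k 0 - σ * a k 1)]
  have hsum : ∑ k, a k 2 ^ 2 ≤ 0 := by
    rcases abs_cases (∑ k, 2 * a k 0 * a k 1) with ⟨hS, -⟩ | ⟨hS, -⟩
    · linarith [hbound 1 (one_pow 2)]
    · linarith [hbound (-1) (by norm_num)]
  have hzero := (sum_eq_zero_iff_of_nonneg fun k _ => sq_nonneg (a k 2)).mp
    (le_antisymm hsum (sum_nonneg fun k _ => sq_nonneg _)) k (mem_univ k)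
  exact pow_eq_zero_iff two_ne_zero |>.mp hzero

theorem circ3_self_coeff_zero (p : Fin 3 → ℝ[X]) (i : Fin 3) :
    (circ3 p p i).coeff 0 =
      if i = 0 then ∑ j, (p j).coeff 0 ^ 2 else 2 * (p 0).coeff 0 * (p i).coeff 0 := by
  unfold circ3
  split_ifs
  · simp [finsetSum_coeff, mul_coeff_zero, sq]
  · simp only [coeff_add, mul_coeff_zero]
    ring

theorem circ3_self_coeff_two (p : Fin 3 → ℝ[X]) (hp : ∀ i, (p i).natDegree ≤ 1) (i : Fin 3) :
    (circ3 p p i).coeff 2 =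
      if i = 0 then ∑ j, (p j).coeff 1 ^ 2 else 2 * (p 0).coeff 1 * (p i).coeff 1 := by
  have hmul (i j : Fin 3) : (p i * p j).coeff 2 = (p i).coeff 1 * (p j).coeff 1 :=
    coeff_mul_add_eq_of_natDegree_le (hp i) (hp j)
  unfold circ3
  split_ifs
  · simp [finsetSum_coeff, hmul, sq]
  · simp only [coeff_add, hmul]
    ring

theorem third_eq_zero_of_sum_circ3_self (p : ι → Fin 3 → ℝ[X])
    (hp : ∀ k i, (p k i).natDegree ≤ 1)
    (h0 : ((∑ k, circ3 (p k) (p k)) 0).coeff 0 ≤ |((∑ k, circ3 (p k) (p k)) 1).coeff 0|)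
    (h2 : ((∑ k, circ3 (p k) (p k)) 0).coeff 2 ≤ |((∑ k, circ3 (p k) (p k)) 1).coeff 2|)
    (k : ι) : p k 2 = 0 := by
  simp only [Finset.sum_apply, finsetSum_coeff, circ3_self_coeff_zero,
    circ3_self_coeff_two _ (hp _), Fin.one_eq_zero_iff, reduceIte] at h0 h2
  rw [eq_X_add_C_of_natDegree_le_one (hp k 2),
    third_eq_zero_of_sum_sq_le_abs (fun k j => (p k j).coeff 0) h0 k,
    third_eq_zero_of_sum_sq_le_abs (fun k j => (p k j).coeff 1) h2 k]
  simp

/-- For q = (1 + x², 1 − x², 2x): (a) q is pointwise in the second-order cone (indeed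
q₁(x)² = q₂(x)² + q₃(x)² and q₁(x) > 0); (b) arrow(q) = Mᵀ M for some polynomial matrix M;
but (c) q is not a sum of terms pₖ ∘ pₖ with each pₖ a triple of polynomials of degree
at most 1. -/
theorem stmt_19 :
    let q : Fin 3 → Polynomial ℝ :=
      ![1 + Polynomial.X ^ 2, 1 - Polynomial.X ^ 2, 2 * Polynomial.X]
    (∀ x : ℝ,
      Real.sqrt ((Polynomial.eval x (q 1)) ^ 2 + (Polynomial.eval x (q 2)) ^ 2) ≤
        Polynomial.eval x (q 0)) ∧
    (∀ x : ℝ,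
      (Polynomial.eval x (q 0)) ^ 2 =
        (Polynomial.eval x (q 1)) ^ 2 + (Polynomial.eval x (q 2)) ^ 2 ∧
      0 < Polynomial.eval x (q 0)) ∧
    (∃ (N : ℕ) (M : Matrix (Fin N) (Fin 3) (Polynomial ℝ)),
      !![q 0, q 1, q 2; q 1, q 0, 0; q 2, 0, q 0] = Mᵀ * M) ∧
    ¬ ∃ (N : ℕ) (p : Fin N → Fin 3 → Polynomial ℝ),
      (∀ k i, (p k i).degree ≤ 1) ∧ q = ∑ k, circ3 (p k) (p k) := by
  intro q
  have hcone (x : ℝ) : (q 0).eval x ^ 2 = (q 1).eval x ^ 2 + (q 2).eval x ^ 2 ∧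
      0 < (q 0).eval x := by
    simp only [q, cons_val_zero, cons_val_one, cons_val_two, head_cons, tail_cons, eval_add,
      eval_sub, eval_one, eval_pow, eval_mul, eval_X, eval_ofNat]
    exact ⟨by ring, by positivity⟩
  refine ⟨fun x => ?_, hcone, ⟨2, !![1, 1, X; X, -X, 1], ?_⟩, ?_⟩
  · rw [← (hcone x).1, Real.sqrt_sq (hcone x).2.le]
  · ext i j : 1
    fin_cases i <;> fin_cases j <;> simp [q, Matrix.mul_apply] <;> ring
  · rintro ⟨N, p, hdeg, hsum⟩
    have hthird := third_eq_zero_of_sum_circ3_self p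
      (fun k i => natDegree_le_of_degree_le (hdeg k i))
      (by rw [← hsum]; simp [q, coeff_one]) (by rw [← hsum]; simp [q, coeff_one])
    simpa [q, circ3, hthird] using congrFun hsum 2
end
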